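/- Let K : C → D be an injective Jordan *-homomorphism of C*-algebras with D unital, and let v be a unitary element of D such that v·K(C) is a C*-subalgebra of D. Then K(C) = v·K(C). -/
import Mathlib

lemma decomp_sq {A : Type*} [NonUnitalNormedRing A] [StarRing A] [CStarRing A]
    [NormedSpace ℂ A] [IsScalarTower ℂ A A] [SMulCommClass ℂ A A] [StarModule ℂ A]
    [CompleteSpace A] (a : A) :
    ∃ c₁ c₂ c₃ c₄ : A, IsSelfAdjoint c₁ ∧ IsSelfAdjoint c₂ ∧ IsSelfAdjoint c₃ ∧
      IsSelfAdjoint c₄ ∧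
      a = c₁*c₁ - c₂*c₂ + Complex.I • (c₃*c₃) - Complex.I • (c₄*c₄) := by
  letI : NonUnitalCStarAlgebra A := { }
  have key : ∀ x : A, IsSelfAdjoint x → ∃ p q : A, IsSelfAdjoint p ∧ IsSelfAdjoint q ∧
      x = p*p - q*q := by
    intro x hx
    set f : ℝ → ℝ := fun t => Real.sqrt (t⁺)
    set g : ℝ → ℝ := fun t => Real.sqrt (t⁻)
    have hf : Continuous f := Real.continuous_sqrt.comp continuous_posPart
    have hg : Continuous g := Real.continuous_sqrt.comp continuous_negPart
    have hf0 : f 0 = 0 := by simp [f]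
    have hg0 : g 0 = 0 := by simp [g]
    refine ⟨cfcₙ f x, cfcₙ g x, cfcₙ_predicate f x, cfcₙ_predicate g x, ?_⟩
    rw [← cfcₙ_mul f f x, ← cfcₙ_mul g g x, ← cfcₙ_sub _ _ x]
    conv_lhs => rw [← cfcₙ_id ℝ x]
    apply cfcₙ_congr
    intro t _
    simp only [f, g]
    rw [Real.mul_self_sqrt (posPart_nonneg t), Real.mul_self_sqrt (negPart_nonneg t)]
    exact (posPart_sub_negPart t).symm
  have hre : IsSelfAdjoint (realPart a : A) := (realPart a).2
  have him : IsSelfAdjoint (imaginaryPart a : A) := (imaginaryPart a).2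
  obtain ⟨p₁, q₁, hp₁, hq₁, h₁⟩ := key _ hre
  obtain ⟨p₂, q₂, hp₂, hq₂, h₂⟩ := key _ him
  refine ⟨p₁, q₁, p₂, q₂, hp₁, hq₁, hp₂, hq₂, ?_⟩
  have := realPart_add_I_smul_imaginaryPart a
  rw [← this, h₁, h₂, smul_sub]
  abel

/-- **Paterson–Sinclair Lemma.** If `K : C → D` is an injective Jordan *-homomorphism of
C*-algebras with `D` unital, and `v` is a unitary of `D` such that `v • K(C)` is a
C*-subalgebra of `D` (closed under multiplication, adjoints, and topologically closed),
then `K(C) = v • K(C)`. -/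
theorem stmt0 {C D : Type*}
    [NonUnitalNormedRing C] [StarRing C] [CStarRing C] [NormedSpace ℂ C]
    [IsScalarTower ℂ C C] [SMulCommClass ℂ C C] [StarModule ℂ C] [CompleteSpace C]
    [NormedRing D] [StarRing D] [CStarRing D] [NormedAlgebra ℂ D] [StarModule ℂ D]
    [CompleteSpace D]
    (K : C →ₗ[ℂ] D) (hinj : Function.Injective K)
    (hstar : ∀ x, K (star x) = star (K x))
    (hJordan : ∀ x y, K ((2 : ℂ)⁻¹ • (x * y + y * x)) = (2 : ℂ)⁻¹ • (K x * K y + K y * K x))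
    (v : D) (hv : v ∈ unitary D)
    (hmul : ∀ a ∈ (v * ·) '' Set.range K, ∀ b ∈ (v * ·) '' Set.range K,
      a * b ∈ (v * ·) '' Set.range K)
    (hstarmem : ∀ a ∈ (v * ·) '' Set.range K, star a ∈ (v * ·) '' Set.range K)
    (hclosed : IsClosed ((v * ·) '' Set.range K)) :
    (v * ·) '' Set.range K = Set.range K := by
  have hv1 : star v * v = 1 := hv.1
  have hv2 : v * star v = 1 := hv.2
  -- cancellation helpers
  have hcl : ∀ x : D, star v * (v * x) = x := fun x => by
    rw [← mul_assoc, hv1, one_mul]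
  have hcl' : ∀ x : D, v * (star v * x) = x := fun x => by
    rw [← mul_assoc, hv2, one_mul]
  -- the Jordan multiplicative identities
  have hKmul : ∀ a b : C, K a * K b + K b * K a = K (a * b + b * a) := by
    intro a b
    have h := hJordan a b
    have : K (a * b + b * a) = (2:ℂ) • K ((2 : ℂ)⁻¹ • (a * b + b * a)) := by
      rw [← map_smul, smul_smul]
      norm_num
    rw [this, h, smul_smul]
    norm_num
  have hsq : ∀ a : C, K a * K a = K (a * a) := by
    intro a
    have h := hKmul a a
    have h2 : (2:ℂ) • (K a * K a) = (2:ℂ) • K (a * a) := by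
      rw [two_smul, two_smul, h, map_add]
    exact smul_right_injective D two_ne_zero h2
  -- membership in the range of K is preserved by star
  have hstarJ : ∀ x ∈ Set.range K, star x ∈ Set.range K := by
    rintro x ⟨a, rfl⟩
    exact ⟨star a, hstar a⟩
  -- Step A : v • K(C) ⊆ K(C)
  have hsa : ∀ d : C, IsSelfAdjoint d → v * K (d * d) ∈ Set.range K := by
    intro d hd
    have hxsa : star (K d) = K d := by rw [← hstar, hd.star_eq]
    have hb1 : v * K d ∈ (v * ·) '' Set.range K := ⟨K d, ⟨d, rfl⟩, rfl⟩
    have hb2 : K d * star v ∈ (v * ·) '' Set.range K := by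
      have := hstarmem _ hb1
      rwa [star_mul, hxsa] at this
    obtain ⟨y, ⟨e, rfl⟩, hy⟩ := hmul _ hb1 _ hb2
    -- hy : v * K e = (v * K d) * (K d * star v)
    have h3 : (v * K d) * (K d * star v) = v * (K (d*d) * star v) := by
      rw [← hsq d]
      noncomm_ring
    rw [h3] at hy
    have h4 : K (d*d) * star v = K e := by
      have := congrArg (fun z => star v * z) hy
      simpa only [hcl] using this.symm
    have h5 : v * K (d * d) = star (K e) := by
      rw [← h4, star_mul, star_star, ← hstar]
      have : star (d * d) = d * d := by rw [star_mul, hd.star_eq]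
      rw [this]
    rw [h5]
    exact hstarJ _ ⟨e, rfl⟩
  have hBsub : ∀ c : C, v * K c ∈ Set.range K := by
    intro c
    obtain ⟨c₁, c₂, c₃, c₄, h₁, h₂, h₃, h₄, hc⟩ := decomp_sq c
    have e1 := hsa c₁ h₁
    have e2 := hsa c₂ h₂
    have e3 := hsa c₃ h₃
    have e4 := hsa c₄ h₄
    obtain ⟨a₁, ha₁⟩ := e1; obtain ⟨a₂, ha₂⟩ := e2
    obtain ⟨a₃, ha₃⟩ := e3; obtain ⟨a₄, ha₄⟩ := e4
    refine ⟨a₁ - a₂ + Complex.I • a₃ - Complex.I • a₄, ?_⟩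
    rw [map_sub, map_add, map_sub, map_smul, map_smul, ha₁, ha₂, ha₃, ha₄, hc]
    simp only [map_sub, map_add, map_smul, hsq]
    rw [mul_sub, mul_add, mul_sub, mul_smul_comm, mul_smul_comm]
  have hBsub' : ((v * ·) '' Set.range K) ⊆ Set.range K := by
    rintro x ⟨y, ⟨a, rfl⟩, rfl⟩
    exact hBsub a
  -- the C*-subalgebra S with carrier v • K(C)
  let S : NonUnitalStarSubalgebra ℂ D :=
    { carrier := (v * ·) '' Set.range K
      add_mem' := by
        rintro x y ⟨x', ⟨a, rfl⟩, rfl⟩ ⟨y', ⟨b, rfl⟩, rfl⟩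
        exact ⟨K (a + b), ⟨a + b, rfl⟩, by
          show v * K (a + b) = v * K a + v * K b; rw [map_add, mul_add]⟩
      zero_mem' := ⟨K 0, ⟨0, rfl⟩, by show v * K 0 = 0; rw [map_zero, mul_zero]⟩
      mul_mem' := fun hx hy => hmul _ hx _ hy
      smul_mem' := by
        rintro c x ⟨x', ⟨a, rfl⟩, rfl⟩
        exact ⟨K (c • a), ⟨c • a, rfl⟩, by
          show v * K (c • a) = c • (v * K a); rw [map_smul, mul_smul_comm]⟩
      star_mem' := fun hx => hstarmem _ hx }
  haveI : CompleteSpace S := hclosed.completeSpace_coe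
  haveI : CStarRing S := ⟨fun x => CStarRing.norm_mul_self_le (x : D)⟩
  -- Step C : for selfadjoint c in S, star v * (c * c) * v ∈ K(C)
  have hCsq : ∀ c : S, IsSelfAdjoint c → star v * ((c : D) * (c : D)) * v ∈ Set.range K := by
    intro c hc
    obtain ⟨y, ⟨a, rfl⟩, hy⟩ := c.2
    have hy' : v * K a = (c : D) := hy
    have hcsa : star (c : D) = (c : D) := congrArg Subtype.val hc.star_eq
    have h1 : K (star a) * star v = (c : D) := by
      rw [← hcsa, ← hy', star_mul, ← hstar]
    have h1' : K (star a) * star v = v * K a := h1.trans hy'.symm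
    have h2 : K (star a) = v * K a * v := by
      rw [← h1', mul_assoc, hv1, mul_one]
    have h3 : star v * ((c : D) * (c : D)) * v = K a * K (star a) := by
      conv_lhs => rw [← hy']
      rw [h2]
      have hassoc : star v * ((v * K a) * (v * K a)) * v
          = (star v * v) * (K a * (v * K a * v)) := by noncomm_ring
      rw [hassoc, hv1, one_mul]
    have h4 : (c : D) * (c : D) = K (star a) * K a := by
      conv_lhs => rw [← hy']
      calc (v * K a) * (v * K a) = (v * K a * v) * K a := by noncomm_ring
      _ = K (star a) * K a := by rw [← h2]
    have h5 : K a * K (star a) = K (a * star a + star a * a) - K (star a) * K a := by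
      rw [← hKmul a (star a)]; abel
    rw [h3, h5, ← h4]
    -- c² ∈ B ⊆ range K
    have hc2 : (c : D) * (c : D) ∈ Set.range K := by
      have : ((c * c : S) : D) ∈ (v * ·) '' Set.range K := (c * c : S).2
      exact hBsub' (by simpa using this)
    obtain ⟨e, he⟩ := hc2
    refine ⟨a * star a + star a * a - e, ?_⟩
    rw [map_sub, he]
  -- Step D : for every b in v • K(C), star v * b * v ∈ K(C)
  have hD : ∀ b : S, star v * (b : D) * v ∈ Set.range K := by
    intro b
    obtain ⟨c₁, c₂, c₃, c₄, h₁, h₂, h₃, h₄, hb⟩ := decomp_sq b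
    have hbD : (b : D) = (c₁ : D) * (c₁ : D) - (c₂ : D) * (c₂ : D)
        + Complex.I • ((c₃ : D) * (c₃ : D)) - Complex.I • ((c₄ : D) * (c₄ : D)) := by
      have := congrArg (Subtype.val) hb
      simpa using this
    obtain ⟨a₁, ha₁⟩ := hCsq c₁ h₁; obtain ⟨a₂, ha₂⟩ := hCsq c₂ h₂
    obtain ⟨a₃, ha₃⟩ := hCsq c₃ h₃; obtain ⟨a₄, ha₄⟩ := hCsq c₄ h₄
    refine ⟨a₁ - a₂ + Complex.I • a₃ - Complex.I • a₄, ?_⟩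
    rw [map_sub, map_add, map_sub, map_smul, map_smul, ha₁, ha₂, ha₃, ha₄, hbD]
    simp only [mul_sub, sub_mul, mul_add, add_mul, mul_smul_comm, smul_mul_assoc]
  -- Step E : K(C) ⊆ v • K(C)
  have hJv : ∀ c : C, K c * v ∈ Set.range K := by
    intro c
    have hb : v * K c ∈ (v * ·) '' Set.range K := ⟨K c, ⟨c, rfl⟩, rfl⟩
    have := hD ⟨v * K c, hb⟩
    simpa only [← mul_assoc, hv1, one_mul] using this
  have hvJ : ∀ c : C, star v * K c ∈ Set.range K := by
    intro c
    obtain ⟨e, he⟩ := hJv (star c)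
    have : star v * K c = star (K (star c) * v) := by
      rw [star_mul, ← hstar, star_star]
    rw [this, ← he]
    exact hstarJ _ ⟨e, rfl⟩
  apply Set.Subset.antisymm hBsub'
  rintro x ⟨c, rfl⟩
  obtain ⟨e, he⟩ := hvJ c
  exact ⟨K e, ⟨e, rfl⟩, by show v * K e = K c; rw [he, hcl']⟩
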